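/- arXiv:0901.4765 — 3 statements merged into one kernel-verified Lean document; each statement's English description precedes it below -/
import Mathlib

section
/- Let 1 ≤ n ≤ k. For every S_{n+1}-invariant polynomial function p on 𝔥_n there exists an S_{k+1}-invariant polynomial function P on 𝔥_k such that P(ι(x)) = p(x) for all x ∈ 𝔥_n; that is, the restriction map along ι from S_{k+1}-invariant polynomial functions on 𝔥_k to S_{n+1}-invariant polynomial functions on 𝔥_n is surjective. -/
/-!
Averaging `q` over `S_{n+1}` does not change its values on `𝔥_n` and yields a symmetric
polynomial, i.e. a polynomial `F(e_1, …, e_{n+1})` in the elementary symmetric polynomials.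
The same `F` applied to the elementary symmetric polynomials in `k + 1` variables is symmetric,
and it restricts to the average along `ι` because padding with zeros does not change the values
of elementary symmetric polynomials.
-/

noncomputable section

namespace WeylA

/-- The type-`A_m` Cartan subalgebra `𝔥_m = {x ∈ ℝ^{m+1} : ∑ x_i = 0}`. -/
def hplane (m : ℕ) : Set (Fin (m + 1) → ℝ) := {x | ∑ i, x i = 0}

/-- The zero-padding embedding `ι : ℝ^{n+1} → ℝ^{k+1} = ℝ^{k-n} × ℝ^{n+1}`. -/
def pad (k n : ℕ) (x : Fin (n + 1) → ℝ) : (Fin (k - n) ⊕ Fin (n + 1)) → ℝ :=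
  Sum.elim 0 x

end WeylA

open WeylA

theorem Multiset.esymm_zero_cons {R : Type*} [CommSemiring R] (s : Multiset R) (j : ℕ) :
    (0 ::ₘ s).esymm j = s.esymm j := by
  cases j with
  | zero => simp [Multiset.esymm]
  | succ j => simp [Multiset.esymm, Multiset.powersetCard_cons]

theorem Multiset.esymm_replicate_zero_add {R : Type*} [CommSemiring R] (m : ℕ)
    (s : Multiset R) (j : ℕ) : (Multiset.replicate m 0 + s).esymm j = s.esymm j := by
  induction m with
  | zero => simp
  | succ m ih => rw [Multiset.replicate_succ, Multiset.cons_add, Multiset.esymm_zero_cons, ih]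

namespace MvPolynomial

open Finset

variable {σ τ R : Type*}

theorem IsSymmetric.eval_comp_perm [CommSemiring R] {p : MvPolynomial σ R}
    (hp : p.IsSymmetric) (e : Equiv.Perm σ) (x : σ → R) :
    eval (x ∘ e) p = eval x p := by
  rw [← eval_rename, hp e]

section Padding

variable [Fintype σ] [Fintype τ]

theorem eval_sumElim_zero_esymm [CommSemiring R] (x : σ → R) (j : ℕ) :
    eval (Sum.elim 0 x) (esymm (τ ⊕ σ) R j) = eval x (esymm σ R j) := by
  simp only [← aeval_eq_eval, aeval_esymm_eq_multiset_esymm, ← univ_disjSum_univ]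
  simp [disjSum, Multiset.map_disjSum, Multiset.esymm_replicate_zero_add]

theorem eval_sumElim_zero_esymmAlgHom [CommRing R] {m : ℕ} (x : σ → R)
    (F : MvPolynomial (Fin m) R) :
    eval (Sum.elim 0 x) (esymmAlgHom (τ ⊕ σ) R m F : MvPolynomial (τ ⊕ σ) R) =
      eval x (esymmAlgHom σ R m F : MvPolynomial σ R) := by
  simp only [esymmAlgHom_apply, ← aeval_eq_eval, aeval_eq_bind₁, aeval_bind₁]
  simp only [aeval_eq_eval, eval_sumElim_zero_esymm]

end Padding

section Symmetrize

variable [Fintype σ] [DecidableEq σ] [Field R]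

def symmetrize (p : MvPolynomial σ R) : MvPolynomial σ R :=
  (Fintype.card (Equiv.Perm σ) : R)⁻¹ • ∑ e : Equiv.Perm σ, rename e p

theorem isSymmetric_symmetrize (p : MvPolynomial σ R) : (symmetrize p).IsSymmetric := by
  intro e
  simp only [symmetrize, map_smul, map_sum, rename_rename]
  congr 1
  exact Fintype.sum_equiv (Equiv.mulLeft e) _ _ fun _ => rfl

theorem eval_symmetrize [CharZero R] {p : MvPolynomial σ R} {x : σ → R}
    (hx : ∀ e : Equiv.Perm σ, eval (x ∘ e) p = eval x p) :
    eval x (symmetrize p) = eval x p := by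
  simp only [symmetrize, smul_eval, map_sum, eval_rename, hx, sum_const, card_univ, nsmul_eq_mul]
  exact inv_mul_cancel_left₀ (Nat.cast_ne_zero.mpr Fintype.card_ne_zero) _

end Symmetrize

end MvPolynomial

open MvPolynomial

theorem typeA_invariant_restriction_surjective_general
    (n k : ℕ)
    (q : MvPolynomial (Fin (n + 1)) ℝ)
    -- `q` defines an `S_{n+1}`-invariant function on `𝔥_n`:
    (hq : ∀ τ : Equiv.Perm (Fin (n + 1)), ∀ x ∈ hplane n,
      MvPolynomial.eval (fun j => x (τ j)) q = MvPolynomial.eval x q) :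
    ∃ Q : MvPolynomial (Fin (k - n) ⊕ Fin (n + 1)) ℝ,
      -- `Q` defines an `S_{k+1}`-invariant function on `𝔥_k`:
      (∀ σ : Equiv.Perm (Fin (k - n) ⊕ Fin (n + 1)),
        ∀ y : (Fin (k - n) ⊕ Fin (n + 1)) → ℝ, (∑ i, y i) = 0 →
          MvPolynomial.eval (fun i => y (σ i)) Q = MvPolynomial.eval y Q) ∧
      -- `Q` restricts to `q` on `𝔥_n`:
      ∀ x ∈ hplane n, MvPolynomial.eval (pad k n x) Q = MvPolynomial.eval x q := by
  obtain ⟨F, hF⟩ := esymmAlgHom_surjective ℝ (Fintype.card_fin (n + 1)).le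
    ⟨symmetrize q, isSymmetric_symmetrize q⟩
  set Q := esymmAlgHom (Fin (k - n) ⊕ Fin (n + 1)) ℝ (n + 1) F
  refine ⟨Q, fun σ y _ => Q.2.eval_comp_perm σ y, fun x hx => ?_⟩
  rw [pad, eval_sumElim_zero_esymmAlgHom, hF, eval_symmetrize (hq · x hx)]

/-- For `1 ≤ n ≤ k`, every `S_{n+1}`-invariant polynomial function on `𝔥_n` is the
restriction along the zero-padding embedding `ι` of an `S_{k+1}`-invariant polynomial
function on `𝔥_k`; i.e. the restriction map of invariant polynomial functions is
surjective. -/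
theorem typeA_invariant_restriction_surjective
    (n k : ℕ) (hn : 1 ≤ n) (hnk : n ≤ k)
    (q : MvPolynomial (Fin (n + 1)) ℝ)
    -- `q` defines an `S_{n+1}`-invariant function on `𝔥_n`:
    (hq : ∀ τ : Equiv.Perm (Fin (n + 1)), ∀ x ∈ hplane n,
      MvPolynomial.eval (fun j => x (τ j)) q = MvPolynomial.eval x q) :
    ∃ Q : MvPolynomial (Fin (k - n) ⊕ Fin (n + 1)) ℝ,
      -- `Q` defines an `S_{k+1}`-invariant function on `𝔥_k`:
      (∀ σ : Equiv.Perm (Fin (k - n) ⊕ Fin (n + 1)),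
        ∀ y : (Fin (k - n) ⊕ Fin (n + 1)) → ℝ, (∑ i, y i) = 0 →
          MvPolynomial.eval (fun i => y (σ i)) Q = MvPolynomial.eval y Q) ∧
      -- `Q` restricts to `q` on `𝔥_n`:
      ∀ x ∈ hplane n, MvPolynomial.eval (pad k n x) Q = MvPolynomial.eval x q :=
  typeA_invariant_restriction_surjective_general n k q hq
end
end

section
/- Let 1 ≤ n < k. Every polynomial function in the image of the restriction map P ↦ P ∘ ι from D_k-invariant polynomial functions on ℝ^k to polynomial functions on ℝ^n is invariant under all sign changes of coordinates (equivalently, it is a polynomial in x_1², …, x_n²). In particular, the D_n-invariant polynomial x_1⋯x_n is not in the image, so the restriction map I_{D_k}(ℝ^k) → I_{D_n}(ℝ^n) is not surjective. -/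
/-!
Since `k > n`, the image `ι(ℝ^n)` has a coordinate that vanishes identically. Any sign
change `δ` of the coordinates of `ℝ^n` extends to an element of `D_k` by also flipping that
coordinate when `δ` flips an odd number of signs; the extra flip does not move `ι(ℝ^n)`. Hence
restrictions of `D_k`-invariants are invariant under every sign change, which `x_1⋯x_n` is not.
-/

noncomputable section

namespace WeylBC

/-- A sign vector: each entry is `±1`. -/
def IsSign {α : Type*} (ε : α → ℝ) : Prop := ∀ i, ε i = 1 ∨ ε i = -1

/-- The signed-permutation action `x ↦ (ε_i x_{σ(i)})_i` of the hyperoctahedral group. -/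
def sgnAct {α : Type*} (σ : Equiv.Perm α) (ε : α → ℝ) (x : α → ℝ) : α → ℝ :=
  fun i => ε i * x (σ i)

/-- The zero-padding embedding `ι : ℝ^n → ℝ^k = ℝ^{k-n} × ℝ^n`. -/
def pad (k n : ℕ) (x : Fin n → ℝ) : (Fin (k - n) ⊕ Fin n) → ℝ :=
  Sum.elim 0 x

/-- The image `ι(ℝ^n) ⊆ ℝ^k`. -/
def padSet (k n : ℕ) : Set ((Fin (k - n) ⊕ Fin n) → ℝ) :=
  {y | ∀ i : Fin (k - n), y (Sum.inl i) = 0}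

end WeylBC

open WeylBC

namespace WeylBC

variable {α β : Type*}

lemma IsSign.prod_eq_one_or_neg_one [Fintype α] {ε : α → ℝ} (hε : IsSign ε) :
    ∏ i, ε i = 1 ∨ ∏ i, ε i = -1 := by
  refine mul_self_eq_one_iff.mp ?_
  rw [← Finset.prod_mul_distrib]
  exact Finset.prod_eq_one fun i _ => by rcases hε i with h | h <;> simp [h]

lemma IsSign.update [DecidableEq α] {ε : α → ℝ} (hε : IsSign ε) (i : α) {a : ℝ}
    (ha : a = 1 ∨ a = -1) : IsSign (Function.update ε i a) := by
  intro j
  rcases eq_or_ne j i with rfl | hj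
  · simpa using ha
  · simpa [hj] using hε j

lemma exists_isSign_prod_eq_neg_one [Fintype α] [Nonempty α] :
    ∃ δ : α → ℝ, IsSign δ ∧ ∏ i, δ i = -1 := by
  classical
  let i := Classical.arbitrary α
  refine ⟨Function.update 1 i (-1), IsSign.update (fun _ => Or.inl rfl) i (Or.inr rfl), ?_⟩
  simp [Finset.prod_update_of_mem]

def evenExtension [DecidableEq β] [Fintype α] (b : β) (δ : α → ℝ) : β ⊕ α → ℝ :=
  Sum.elim (Function.update 1 b (∏ j, δ j)) δ

section evenExtension

variable [DecidableEq β] [Fintype α] {δ : α → ℝ}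

lemma IsSign.evenExtension (hδ : IsSign δ) (b : β) : IsSign (evenExtension b δ) := by
  rintro (i | j)
  · exact IsSign.update (fun _ => Or.inl rfl) b hδ.prod_eq_one_or_neg_one i
  · exact hδ j

lemma prod_evenExtension [Fintype β] (hδ : IsSign δ) (b : β) :
    ∏ i, evenExtension b δ i = 1 := by
  rw [Fintype.prod_sum_type]
  simp only [WeylBC.evenExtension, Sum.elim_inl, Sum.elim_inr, Finset.prod_update_of_mem
    (Finset.mem_univ b), Pi.one_apply, Finset.prod_const_one, mul_one]
  rcases hδ.prod_eq_one_or_neg_one with h | h <;> simp [h]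

lemma sgnAct_refl_evenExtension_sum_elim_zero (b : β) (x : α → ℝ) :
    sgnAct (Equiv.refl _) (evenExtension b δ) (Sum.elim (0 : β → ℝ) x) =
      Sum.elim (0 : β → ℝ) fun j => δ j * x j := by
  ext (i | j) <;> simp [sgnAct, WeylBC.evenExtension]

end evenExtension

theorem apply_sum_elim_zero_mul_eq_of_even_sign_invariant [Fintype α] [Fintype β] [Nonempty β]
    (f : (β ⊕ α → ℝ) → ℝ)
    (hf : ∀ ε : β ⊕ α → ℝ, IsSign ε → ∏ i, ε i = 1 →
      ∀ y, f (sgnAct (Equiv.refl _) ε y) = f y)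
    {δ : α → ℝ} (hδ : IsSign δ) (x : α → ℝ) :
    f (Sum.elim (0 : β → ℝ) fun j => δ j * x j) = f (Sum.elim 0 x) := by
  classical
  let b := Classical.arbitrary β
  rw [← sgnAct_refl_evenExtension_sum_elim_zero b x]
  exact hf _ (hδ.evenExtension b) (prod_evenExtension hδ b) _

end WeylBC

/-- For `1 ≤ n < k`, every polynomial function in the image of the restriction map
`I_{D_k}(ℝ^k) → S(ℝ^n)` is invariant under all sign changes of the coordinates; in
particular the `D_n`-invariant polynomial `x_1⋯x_n` is not in the image, so the
restriction map `I_{D_k}(ℝ^k) → I_{D_n}(ℝ^n)` is not surjective. -/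
theorem typeD_invariant_restriction_not_surjective
    (n k : ℕ) (hn : 1 ≤ n) (hnk : n < k) :
    -- restrictions of `D_k`-invariants are invariant under all sign changes:
    (∀ Q : MvPolynomial (Fin (k - n) ⊕ Fin n) ℝ,
      (∀ (σ : Equiv.Perm (Fin (k - n) ⊕ Fin n)) (ε : (Fin (k - n) ⊕ Fin n) → ℝ),
        IsSign ε → (∏ i, ε i) = 1 → ∀ y : (Fin (k - n) ⊕ Fin n) → ℝ,
          MvPolynomial.eval (sgnAct σ ε y) Q = MvPolynomial.eval y Q) →
      ∀ δ : Fin n → ℝ, IsSign δ → ∀ x : Fin n → ℝ,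
        MvPolynomial.eval (pad k n fun j => δ j * x j) Q =
          MvPolynomial.eval (pad k n x) Q) ∧
    -- `x_1⋯x_n` is not in the image of the restriction map:
    ¬ ∃ Q : MvPolynomial (Fin (k - n) ⊕ Fin n) ℝ,
      (∀ (σ : Equiv.Perm (Fin (k - n) ⊕ Fin n)) (ε : (Fin (k - n) ⊕ Fin n) → ℝ),
        IsSign ε → (∏ i, ε i) = 1 → ∀ y : (Fin (k - n) ⊕ Fin n) → ℝ,
          MvPolynomial.eval (sgnAct σ ε y) Q = MvPolynomial.eval y Q) ∧
      ∀ x : Fin n → ℝ, MvPolynomial.eval (pad k n x) Q = ∏ j, x j := by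
  have : Nonempty (Fin (k - n)) := ⟨⟨0, by omega⟩⟩
  have : Nonempty (Fin n) := ⟨⟨0, hn⟩⟩
  refine ⟨fun Q hQ _ hδ x => apply_sum_elim_zero_mul_eq_of_even_sign_invariant
    (MvPolynomial.eval · Q) (hQ _) hδ x, ?_⟩
  rintro ⟨Q, hQ, hres⟩
  obtain ⟨δ, hδ, hδ_prod⟩ := exists_isSign_prod_eq_neg_one (α := Fin n)
  have h : MvPolynomial.eval (pad k n fun j => δ j * 1) Q = MvPolynomial.eval (pad k n 1) Q :=
    apply_sum_elim_zero_mul_eq_of_even_sign_invariant (MvPolynomial.eval · Q) (hQ _) hδ 1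
  simp only [hres, Pi.one_apply, mul_one, Finset.prod_const_one, hδ_prod] at h
  norm_num at h
end
end

section
/- Let ℓ ≥ 2 and k ≥ ℓ + 1, and regard 𝔥_ℓ = {x ∈ ℝ^{ℓ+1} : x_1 + ⋯ + x_{ℓ+1} = 0} as a subspace of ℝ^k via the zero-padding embedding ι into the last ℓ+1 coordinates. Then for every H_k-invariant polynomial function P on ℝ^k, the restricted polynomial q = P ∘ ι on 𝔥_ℓ is even, i.e., q(−x) = q(x) for all x ∈ 𝔥_ℓ. Consequently, since the S_{ℓ+1}-invariant polynomial x ↦ x_1³ + ⋯ + x_{ℓ+1}³ on 𝔥_ℓ is odd and not identically zero for ℓ ≥ 2, the restriction map from H_k-invariant polynomial functions on ℝ^k to S_{ℓ+1}-invariant polynomial functions on 𝔥_ℓ is not surjective. -/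
noncomputable section

open WeylBC

/-!
The sign vector `ε = -1` with the trivial permutation is an element of `H_k` acting as `-id`,
and zero-padding commutes with negation, so an `H_k`-invariant polynomial restricts to an even
function on `𝔥_ℓ`. The cube sum is odd on `𝔥_ℓ` and, once `ℓ + 1 ≥ 3`, nonzero there
(at `(2, -1, -1, 0, …, 0)`), so it cannot be such a restriction.
-/

namespace WeylBC

variable {α : Type*}

def IsHyperoctahedralInvariant (P : MvPolynomial α ℝ) : Prop :=
  ∀ (σ : Equiv.Perm α) (ε : α → ℝ), IsSign ε →
    ∀ y : α → ℝ, MvPolynomial.eval (sgnAct σ ε y) P = MvPolynomial.eval y P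

theorem sgnAct_refl_neg_one (y : α → ℝ) : sgnAct (Equiv.refl α) (fun _ => -1) y = -y := by
  funext i
  simp [sgnAct]

theorem IsHyperoctahedralInvariant.eval_neg {P : MvPolynomial α ℝ}
    (hP : IsHyperoctahedralInvariant P) (y : α → ℝ) :
    MvPolynomial.eval (-y) P = MvPolynomial.eval y P := by
  simpa [sgnAct_refl_neg_one] using hP (Equiv.refl α) (fun _ => -1) (fun _ => Or.inr rfl) y

theorem pad_neg (k n : ℕ) (x : Fin n → ℝ) : pad k n (-x) = -pad k n x := by
  funext i
  cases i <;> simp [pad]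

theorem IsHyperoctahedralInvariant.eval_pad_neg {k n : ℕ}
    {P : MvPolynomial (Fin (k - n) ⊕ Fin n) ℝ} (hP : IsHyperoctahedralInvariant P)
    (x : Fin n → ℝ) :
    MvPolynomial.eval (pad k n (-x)) P = MvPolynomial.eval (pad k n x) P := by
  rw [pad_neg]
  exact hP.eval_neg _

end WeylBC

theorem sum_neg_pow_three {ι : Type*} [Fintype ι] (x : ι → ℝ) :
    ∑ i, (-x) i ^ 3 = -∑ i, x i ^ 3 := by
  simp [Odd.neg_pow (by decide : Odd 3)]

theorem exists_sum_eq_zero_sum_pow_three_ne_zero {n : ℕ} (hn : 3 ≤ n) :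
    ∃ x : Fin n → ℝ, ∑ i, x i = 0 ∧ ∑ i, x i ^ 3 ≠ 0 := by
  obtain ⟨m, rfl⟩ := Nat.exists_eq_add_of_le' hn
  refine ⟨Fin.cons 2 (Fin.cons (-1) (Fin.cons (-1) 0)), ?_, ?_⟩ <;>
    norm_num [Fin.sum_univ_succ]

theorem Hk_restriction_to_hplane_even_and_not_surjective_general
    (l k : ℕ) (hl : 2 ≤ l) :
    -- restrictions of `H_k`-invariants to `𝔥_ℓ` are even:
    (∀ P : MvPolynomial (Fin (k - (l + 1)) ⊕ Fin (l + 1)) ℝ,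
      (∀ (σ : Equiv.Perm (Fin (k - (l + 1)) ⊕ Fin (l + 1)))
         (ε : (Fin (k - (l + 1)) ⊕ Fin (l + 1)) → ℝ), IsSign ε →
        ∀ y : (Fin (k - (l + 1)) ⊕ Fin (l + 1)) → ℝ,
          MvPolynomial.eval (sgnAct σ ε y) P = MvPolynomial.eval y P) →
      ∀ x : Fin (l + 1) → ℝ, ∑ i, x i = 0 →
        MvPolynomial.eval (pad k (l + 1) (-x)) P =
          MvPolynomial.eval (pad k (l + 1) x) P) ∧
    -- `x ↦ ∑ x_i³` on `𝔥_ℓ` is not such a restriction: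
    ¬ ∃ P : MvPolynomial (Fin (k - (l + 1)) ⊕ Fin (l + 1)) ℝ,
      (∀ (σ : Equiv.Perm (Fin (k - (l + 1)) ⊕ Fin (l + 1)))
         (ε : (Fin (k - (l + 1)) ⊕ Fin (l + 1)) → ℝ), IsSign ε →
        ∀ y : (Fin (k - (l + 1)) ⊕ Fin (l + 1)) → ℝ,
          MvPolynomial.eval (sgnAct σ ε y) P = MvPolynomial.eval y P) ∧
      ∀ x : Fin (l + 1) → ℝ, ∑ i, x i = 0 →
        MvPolynomial.eval (pad k (l + 1) x) P = ∑ i, (x i) ^ 3 := by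
  refine ⟨fun P hP x _ => IsHyperoctahedralInvariant.eval_pad_neg hP x, ?_⟩
  rintro ⟨P, hP, hres⟩
  obtain ⟨x, hx, hcube⟩ := exists_sum_eq_zero_sum_pow_three_ne_zero (show 3 ≤ l + 1 by omega)
  have hx' : ∑ i, (-x) i = 0 := by simp [hx]
  have hodd : -∑ i, x i ^ 3 = ∑ i, x i ^ 3 := by
    rw [← sum_neg_pow_three, ← hres x hx, ← hres (-x) hx',
      IsHyperoctahedralInvariant.eval_pad_neg hP x]
  exact hcube (by linarith)

/-- For `ℓ ≥ 2` and `k ≥ ℓ+1`, the restriction to `𝔥_ℓ ⊆ ℝ^k` (zero-padding into the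
last `ℓ+1` coordinates) of every `H_k`-invariant polynomial function on `ℝ^k` is even;
consequently, since `x ↦ x_1³+⋯+x_{ℓ+1}³` is an odd, not identically zero,
`S_{ℓ+1}`-invariant polynomial function on `𝔥_ℓ`, the restriction map from
`H_k`-invariant polynomial functions on `ℝ^k` to `S_{ℓ+1}`-invariant polynomial
functions on `𝔥_ℓ` is not surjective. -/
theorem Hk_restriction_to_hplane_even_and_not_surjective
    (l k : ℕ) (hl : 2 ≤ l) (hk : l + 1 ≤ k) :
    -- restrictions of `H_k`-invariants to `𝔥_ℓ` are even:
    (∀ P : MvPolynomial (Fin (k - (l + 1)) ⊕ Fin (l + 1)) ℝ,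
      (∀ (σ : Equiv.Perm (Fin (k - (l + 1)) ⊕ Fin (l + 1)))
         (ε : (Fin (k - (l + 1)) ⊕ Fin (l + 1)) → ℝ), IsSign ε →
        ∀ y : (Fin (k - (l + 1)) ⊕ Fin (l + 1)) → ℝ,
          MvPolynomial.eval (sgnAct σ ε y) P = MvPolynomial.eval y P) →
      ∀ x : Fin (l + 1) → ℝ, ∑ i, x i = 0 →
        MvPolynomial.eval (pad k (l + 1) (-x)) P =
          MvPolynomial.eval (pad k (l + 1) x) P) ∧
    -- `x ↦ ∑ x_i³` on `𝔥_ℓ` is not such a restriction: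
    ¬ ∃ P : MvPolynomial (Fin (k - (l + 1)) ⊕ Fin (l + 1)) ℝ,
      (∀ (σ : Equiv.Perm (Fin (k - (l + 1)) ⊕ Fin (l + 1)))
         (ε : (Fin (k - (l + 1)) ⊕ Fin (l + 1)) → ℝ), IsSign ε →
        ∀ y : (Fin (k - (l + 1)) ⊕ Fin (l + 1)) → ℝ,
          MvPolynomial.eval (sgnAct σ ε y) P = MvPolynomial.eval y P) ∧
      ∀ x : Fin (l + 1) → ℝ, ∑ i, x i = 0 →
        MvPolynomial.eval (pad k (l + 1) x) P = ∑ i, (x i) ^ 3 :=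
  Hk_restriction_to_hplane_even_and_not_surjective_general l k hl
end
end
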